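/- Let G be a graph in the family T_m (m ≥ 2): G consists of three graphs H_1, H_2, H_3, each a disjoint union of m edges, together with, for each triple (x_1, x_2, x_3) with x_i ∈ V(H_i), an independent set I_{(x_1,x_2,x_3)} of size at least m whose vertices are joined to x_1, x_2, and x_3. Then γ_{3rt}(G) = (3/2) · γ(G). -/

import Mathlib

open SimpleGraph Finset

/-- `f` is a `k`-rainbow dominating function of `G`: every vertex with empty label
sees all colors of `Fin k` among its neighbors' labels. -/
def IsKRDF {V : Type*} (G : SimpleGraph V) (k : ℕ) (f : V → Finset (Fin k)) : Prop :=
  ∀ v, f v = ∅ → ∀ i : Fin k, ∃ u, G.Adj v u ∧ i ∈ f u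

/-- `f` is a `k`-rainbow total dominating function of `G`: a `k`RDF such that every
vertex labeled by a singleton `{i}` has a neighbor whose label contains `i`. -/
def IsKRTDF {V : Type*} (G : SimpleGraph V) (k : ℕ) (f : V → Finset (Fin k)) : Prop :=
  IsKRDF G k f ∧ ∀ v (i : Fin k), f v = {i} → ∃ u, G.Adj v u ∧ i ∈ f u

/-- The `k`-rainbow domination number of `G`. -/
noncomputable def rdnum {V : Type*} [Fintype V] (G : SimpleGraph V) (k : ℕ) : ℕ :=
  sInf {n | ∃ f : V → Finset (Fin k), IsKRDF G k f ∧ ∑ v, (f v).card = n}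

/-- The `k`-rainbow total domination number of `G`. -/
noncomputable def rtdnum {V : Type*} [Fintype V] (G : SimpleGraph V) (k : ℕ) : ℕ :=
  sInf {n | ∃ f : V → Finset (Fin k), IsKRTDF G k f ∧ ∑ v, (f v).card = n}

/-- The domination number of `G`. -/
noncomputable def domnum {V : Type*} [Fintype V] (G : SimpleGraph V) : ℕ :=
  sInf {n | ∃ D : Finset V, (∀ v ∉ D, ∃ u ∈ D, G.Adj u v) ∧ D.card = n}

/-- The total domination number of `G`. -/
noncomputable def totdomnum {V : Type*} [Fintype V] (G : SimpleGraph V) : ℕ :=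
  sInf {n | ∃ D : Finset V, (∀ v, ∃ u ∈ D, G.Adj u v) ∧ D.card = n}

/-- A graph in the family `T_m`. It consists of three graphs `H_1, H_2, H_3`
(indexed by `Fin 3`), each a disjoint union of `m` edges (on vertices
`Fin (2*m)`, where `2j` is matched with `2j+1`), together with, for each triple
`t = (x₁, x₂, x₃)` with `xᵢ ∈ V(Hᵢ)`, an independent set `I_t` of size `s t ≥ m`
whose vertices are joined to `x₁`, `x₂` and `x₃`. -/
def Tgraph (m : ℕ) (s : Fin (2 * m) × Fin (2 * m) × Fin (2 * m) → ℕ) :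
    SimpleGraph ((Fin 3 × Fin (2 * m)) ⊕ (Σ t : Fin (2 * m) × Fin (2 * m) × Fin (2 * m), Fin (s t))) :=
  SimpleGraph.fromRel (fun u v =>
    match u, v with
    | Sum.inl (i, j), Sum.inl (i', j') => i = i' ∧ j ≠ j' ∧ (j : ℕ) / 2 = (j' : ℕ) / 2
    | Sum.inl (i, j), Sum.inr ⟨(x1, x2, x3), _⟩ =>
        (i = 0 ∧ j = x1) ∨ (i = 1 ∧ j = x2) ∨ (i = 2 ∧ j = x3)
    | _, _ => False)

/-!
Both numbers are computed: `γ = 4m` and `γ_{3rt} = 6m`. Labelling every vertex of `H_i` by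
`{i}` is a 3RTDF of weight `6m`, and `V(H_1)` together with one end of every edge of `H_2` and
`H_3` is a dominating set of size `4m`.

For the lower bounds, call a triple `t` free for a set `A` of vertices of `H_1 ∪ H_2 ∪ H_3` if
none of its coordinates lies in `A`: the `≥ m` vertices of `I_t` then have no neighbour in `A`.
If `A` misses `x_i ≥ 1` vertices of each `H_i`, there are `x_1 x_2 x_3 ≥ x_1 + x_2 + x_3 - 2`
free triples, so `|A| + #free ≥ 6m - 2`.
* A dominating set `D` containing no whole `H_i` contains `I_t` for every triple free for
  `D ∩ V(H)`, so `|D| ≥ 6m - 2`. If `D` contains `V(H_i)`, the `4m` vertices of the other two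
  `H_j` are dominated by vertices of `D \ V(H_i)`, each of which dominates at most two of them.
* For a 3RDF `f`, either every colour `c` occurs on at least `2m` vertices of `H`, or some colour
  occurs on fewer; then the vertices of `I_t` are labelled for each of the `≥ 4m - 1` triples
  free for the vertices carrying `c`, and `m (4m - 1) ≥ 6m`.
-/

lemma add_add_le_mul_mul_add_two {x y z : ℕ} (hx : 1 ≤ x) (hy : 1 ≤ y) (hz : 1 ≤ z) :
    x + y + z ≤ x * y * z + 2 := by
  obtain ⟨a, rfl⟩ := Nat.exists_eq_add_of_le hx
  obtain ⟨b, rfl⟩ := Nat.exists_eq_add_of_le hy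
  obtain ⟨c, rfl⟩ := Nat.exists_eq_add_of_le hz
  nlinarith [Nat.zero_le (a * b * c), Nat.zero_le (a * b), Nat.zero_le (a * c),
    Nat.zero_le (b * c)]

lemma card_filter_val_mod_two_eq_zero (m : ℕ) :
    #{j : Fin (2 * m) | (j : ℕ) % 2 = 0} = m := by
  calc #{j : Fin (2 * m) | (j : ℕ) % 2 = 0} = #(univ : Finset (Fin m)) :=
        card_nbij' (fun j => ⟨j / 2, by omega⟩) (fun k => ⟨2 * k, by omega⟩)
          (by simp) (by simp) (fun j hj => Fin.ext <| by simp at hj ⊢; omega)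
          (fun k _ => by ext; simp)
    _ = m := by simp

lemma sum_card_eq_sum_card_filter_mem {ι κ : Type*} [Fintype ι] [Fintype κ] [DecidableEq κ]
    (f : ι → Finset κ) : ∑ i, #(f i) = ∑ k, #{i | k ∈ f i} := by
  simpa [bipartiteAbove, bipartiteBelow] using
    sum_card_bipartiteAbove_eq_sum_card_bipartiteBelow (s := univ) (t := univ)
      (fun i k => k ∈ f i)

lemma card_filter_ne_empty_le_sum_card {ι κ : Type*} [Fintype ι] [DecidableEq κ]
    (f : ι → Finset κ) : #{i | f i ≠ ∅} ≤ ∑ i, #(f i) := by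
  rw [card_filter]
  exact sum_le_sum fun i _ => by
    split_ifs with h
    · exact card_pos.2 (nonempty_iff_ne_empty.2 h)
    · exact Nat.zero_le _

lemma mul_card_le_card_of_forall_mk_mem {ι : Type*} {s : ι → ℕ} {m : ℕ} (hs : ∀ t, m ≤ s t)
    {T : Finset ι} {X : Finset (Σ t, Fin (s t))} (hX : ∀ t ∈ T, ∀ a, ⟨t, a⟩ ∈ X) :
    m * #T ≤ #X :=
  calc m * #T ≤ ∑ t ∈ T, s t := by simpa [mul_comm] using card_nsmul_le_sum T s m fun t _ => hs t
    _ = #(T.sigma fun _ => univ) := by simp [card_sigma]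
    _ ≤ #X := card_le_card fun x hx => by
      obtain ⟨t, a⟩ := x
      exact hX t (mem_sigma.1 hx).1 a

lemma card_le_card_of_forall_mk_mem {α β : Type*} [Fintype α] {A : Finset (β × α)} {i : β}
    (h : ∀ a, (i, a) ∈ A) : Fintype.card α ≤ #A :=
  card_le_card_of_injOn (i, ·) (fun a _ => h a) fun _ _ _ _ h => (Prod.mk.inj h).2

section FreeTriples

variable {α : Type*} [Fintype α] [DecidableEq α]

def tripleCoord (t : α × α × α) : Fin 3 → α := ![t.1, t.2.1, t.2.2]

def freeTriples (A : Finset (Fin 3 × α)) : Finset (α × α × α) :=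
  {t | ∀ i, (i, tripleCoord t i) ∉ A}

lemma freeTriples_eq_product (A : Finset (Fin 3 × α)) :
    freeTriples A =
      ({a | (0, a) ∉ A} : Finset α) ×ˢ ({a | (1, a) ∉ A} : Finset α) ×ˢ
        ({a | (2, a) ∉ A} : Finset α) := by
  ext ⟨a, b, c⟩
  simp [freeTriples, tripleCoord, Fin.forall_fin_succ]

lemma three_mul_card_le_card_add_card_freeTriples (A : Finset (Fin 3 × α))
    (hA : ∀ i, ∃ a, (i, a) ∉ A) : 3 * Fintype.card α ≤ #A + #(freeTriples A) + 2 := by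
  set x : Fin 3 → ℕ := fun i => #{a | (i, a) ∉ A}
  have hx : ∀ i, 1 ≤ x i := fun i => card_pos.2 <| by simpa [Finset.Nonempty] using hA i
  have hA_card : #A = ∑ i, #{a | (i, a) ∈ A} := by
    simp only [card_filter]
    rw [← Fintype.sum_prod_type (f := fun p => if p ∈ A then 1 else 0), sum_boole]
    simp
  have hslice : ∀ i, #{a | (i, a) ∈ A} + x i = Fintype.card α := fun i =>
    card_filter_add_card_filter_not _
  have hfree : #(freeTriples A) = x 0 * x 1 * x 2 := by
    rw [freeTriples_eq_product, card_product, card_product, mul_assoc]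
  have := add_add_le_mul_mul_add_two (hx 0) (hx 1) (hx 2)
  rw [hA_card, hfree, Fin.sum_univ_three]
  linarith [hslice 0, hslice 1, hslice 2]

end FreeTriples

namespace Tgraph

variable {m : ℕ} {s : Fin (2 * m) × Fin (2 * m) × Fin (2 * m) → ℕ}

abbrev Vert (m : ℕ) (s : Fin (2 * m) × Fin (2 * m) × Fin (2 * m) → ℕ) : Type :=
  (Fin 3 × Fin (2 * m)) ⊕ (Σ t : Fin (2 * m) × Fin (2 * m) × Fin (2 * m), Fin (s t))

def mate (j : Fin (2 * m)) : Fin (2 * m) := ⟨2 * (j / 2) + (1 - j % 2), by omega⟩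

lemma adj_inl_inl_iff {i i' : Fin 3} {j j' : Fin (2 * m)} :
    (Tgraph m s).Adj (.inl (i, j)) (.inl (i', j')) ↔ i = i' ∧ j' = mate j := by
  simp only [Tgraph, fromRel_adj]
  constructor
  · rintro ⟨-, ⟨rfl, hj, hdiv⟩ | ⟨rfl, hj, hdiv⟩⟩ <;> refine ⟨rfl, Fin.ext ?_⟩ <;>
      simp only [mate, ne_eq, Fin.ext_iff] at hj ⊢ <;> omega
  · rintro ⟨rfl, rfl⟩
    refine ⟨by simp [mate, Fin.ext_iff]; omega, .inl ⟨rfl, ?_, by simp [mate]; omega⟩⟩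
    simp [mate, Fin.ext_iff]; omega

lemma adj_inl_inr_iff {i : Fin 3} {j : Fin (2 * m)} {t : Fin (2 * m) × Fin (2 * m) × Fin (2 * m)}
    {a : Fin (s t)} : (Tgraph m s).Adj (.inl (i, j)) (.inr ⟨t, a⟩) ↔ j = tripleCoord t i := by
  obtain ⟨x₁, x₂, x₃⟩ := t
  fin_cases i <;> simp [Tgraph, tripleCoord]

lemma adj_inr_iff {t : Fin (2 * m) × Fin (2 * m) × Fin (2 * m)} {a : Fin (s t)} {u : Vert m s} :
    (Tgraph m s).Adj (.inr ⟨t, a⟩) u ↔ ∃ i, u = .inl (i, tripleCoord t i) := by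
  rcases u with ⟨i, j⟩ | ⟨t', a'⟩
  · rw [adj_comm, adj_inl_inr_iff]
    simp
  · simp [Tgraph]

lemma exists_inl_notMem_of_adj_inr {A : Finset (Fin 3 × Fin (2 * m))}
    {t : Fin (2 * m) × Fin (2 * m) × Fin (2 * m)} (ht : t ∈ freeTriples A) {a : Fin (s t)}
    {u : Vert m s} (hu : (Tgraph m s).Adj (.inr ⟨t, a⟩) u) : ∃ p ∉ A, u = .inl p := by
  obtain ⟨i, rfl⟩ := adj_inr_iff.1 hu
  exact ⟨_, (mem_filter.1 ht).2 i, rfl⟩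

def dominatingSet (m : ℕ) (s : Fin (2 * m) × Fin (2 * m) × Fin (2 * m) → ℕ) : Finset (Vert m s) :=
  (({0} : Finset (Fin 3)) ×ˢ univ ∪
    ({1, 2} : Finset (Fin 3)) ×ˢ ({j | (j : ℕ) % 2 = 0} : Finset (Fin (2 * m)))).disjSum ∅

lemma card_dominatingSet : #(dominatingSet m s) = 4 * m := by
  rw [dominatingSet, card_disjSum, card_union_of_disjoint (by simp [Finset.disjoint_left]),
    card_product, card_product, card_filter_val_mod_two_eq_zero]
  simp only [card_singleton, card_univ, Fintype.card_fin, card_pair (by decide : (1 : Fin 3) ≠ 2),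
    card_empty]
  ring

lemma dominates_dominatingSet :
    ∀ v ∉ dominatingSet m s, ∃ u ∈ dominatingSet m s, (Tgraph m s).Adj u v := by
  rintro (⟨i, j⟩ | ⟨t, a⟩) hv
  · refine ⟨.inl (i, mate j), ?_, (adj_inl_inl_iff.2 ⟨rfl, rfl⟩).symm⟩
    simp [dominatingSet, mate] at hv ⊢
    omega
  · exact ⟨.inl (0, t.1), by simp [dominatingSet], adj_inl_inr_iff.2 rfl⟩

def rainbowLabelling (m : ℕ) (s : Fin (2 * m) × Fin (2 * m) × Fin (2 * m) → ℕ) :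
    Vert m s → Finset (Fin 3) :=
  Sum.elim (fun p => {p.1}) fun _ => ∅

lemma isKRTDF_rainbowLabelling : IsKRTDF (Tgraph m s) 3 (rainbowLabelling m s) := by
  refine ⟨?_, ?_⟩
  · rintro (⟨i, j⟩ | ⟨t, a⟩) hv c
    · simp [rainbowLabelling] at hv
    · exact ⟨.inl (c, tripleCoord t c), adj_inr_iff.2 ⟨c, rfl⟩, by simp [rainbowLabelling]⟩
  · rintro (⟨i, j⟩ | ⟨t, a⟩) c hv <;> simp only [rainbowLabelling, Sum.elim_inl, Sum.elim_inr,
      singleton_inj] at hv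
    · exact ⟨.inl (i, mate j), adj_inl_inl_iff.2 ⟨rfl, rfl⟩, by simp [rainbowLabelling, hv]⟩
    · simp at hv

lemma sum_card_rainbowLabelling : ∑ v, #(rainbowLabelling m s v) = 6 * m := by
  simp [rainbowLabelling, Fintype.sum_sum_type, ← mul_assoc]

open Classical in
lemma card_filter_eq_or_adj_le_two (i₀ : Fin 3) (u : Vert m s) :
    #{x ∈ ((univ.erase i₀ ×ˢ univ).disjSum ∅ : Finset (Vert m s)) |
      u = x ∨ (Tgraph m s).Adj u x} ≤ 2 := by
  rcases u with ⟨i, j⟩ | ⟨t, a⟩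
  · refine (card_le_card (t := {.inl (i, j), .inl (i, mate j)}) fun x hx => ?_).trans card_le_two
    obtain ⟨hx, rfl | hadj⟩ := mem_filter.1 hx
    · exact mem_insert_self _ _
    · rcases x with ⟨i', j'⟩ | x
      · obtain ⟨rfl, rfl⟩ := adj_inl_inl_iff.1 hadj
        simp
      · simp at hx
  · calc _ ≤ #((univ.erase i₀).image fun i => (.inl (i, tripleCoord t i) : Vert m s)) := by
          refine card_le_card fun x hx => ?_
          obtain ⟨hx, rfl | hadj⟩ := mem_filter.1 hx
          · simp at hx
          · obtain ⟨i, rfl⟩ := adj_inr_iff.1 hadj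
            simp_all
      _ ≤ 2 := card_image_le.trans (by simp)

lemma four_mul_le_card_of_dominates_of_forall_mem {D : Finset (Vert m s)}
    (hD : ∀ v ∉ D, ∃ u ∈ D, (Tgraph m s).Adj u v) {i₀ : Fin 3} (hi₀ : ∀ j, .inl (i₀, j) ∈ D) :
    4 * m ≤ #D := by
  classical
  set L : Finset (Vert m s) := ({i₀} ×ˢ univ).disjSum ∅
  set X : Finset (Vert m s) := (univ.erase i₀ ×ˢ univ).disjSum ∅
  have hLD : L ⊆ D := by
    rintro (⟨i, j⟩ | x) hv <;> simp [L] at hv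
    exact hv ▸ hi₀ j
  have hX : #X * 1 ≤ #(D \ L) * 2 := by
    refine card_mul_le_card_mul (fun x u => u = x ∨ (Tgraph m s).Adj u x) ?_
      fun u _ => card_filter_eq_or_adj_le_two i₀ u
    rintro (⟨i, j⟩ | x) hx <;> simp only [X, inl_mem_disjSum, inr_mem_disjSum, mem_product,
      mem_erase, mem_univ, and_true, notMem_empty] at hx
    rw [one_le_card]
    by_cases hv : .inl (i, j) ∈ D
    · exact ⟨_, mem_filter.2 ⟨mem_sdiff.2 ⟨hv, by simpa [L, eq_comm] using hx⟩, .inl rfl⟩⟩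
    · obtain ⟨u, hu, hadj⟩ := hD _ hv
      refine ⟨u, mem_filter.2 ⟨mem_sdiff.2 ⟨hu, ?_⟩, .inr hadj⟩⟩
      rcases u with ⟨i', j'⟩ | u
      · simp only [L, inl_mem_disjSum, mem_product, mem_singleton, mem_univ, and_true]
        exact fun h => hx (h ▸ (adj_inl_inl_iff.1 hadj).1.symm)
      · simp [L]
  have hL : #L = 2 * m := by simp [L]
  have : #X = 4 * m := by simp [X, ← mul_assoc]
  have := card_sdiff_add_card_eq_card hLD
  omega

lemma four_mul_le_card_of_dominates_of_forall_exists_notMem (hs : ∀ t, m ≤ s t)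
    {D : Finset (Vert m s)} (hD : ∀ v ∉ D, ∃ u ∈ D, (Tgraph m s).Adj u v)
    (hmiss : ∀ i, ∃ j, .inl (i, j) ∉ D) : 4 * m ≤ #D := by
  have hfree : m * #(freeTriples D.toLeft) ≤ #D.toRight :=
    mul_card_le_card_of_forall_mk_mem hs fun t ht a => by
      rw [mem_toRight]
      by_contra hv
      obtain ⟨u, hu, hadj⟩ := hD _ hv
      obtain ⟨p, hp, rfl⟩ := exists_inl_notMem_of_adj_inr ht hadj.symm
      exact hp (mem_toLeft.2 hu)
  have hkey := three_mul_card_le_card_add_card_freeTriples D.toLeft (by simpa using hmiss)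
  rw [← card_toLeft_add_card_toRight]
  simp only [Fintype.card_fin] at hkey
  rcases Nat.eq_zero_or_pos m with rfl | hm
  · simp
  · nlinarith

lemma four_mul_le_card_of_dominates (hs : ∀ t, m ≤ s t) {D : Finset (Vert m s)}
    (hD : ∀ v ∉ D, ∃ u ∈ D, (Tgraph m s).Adj u v) : 4 * m ≤ #D := by
  by_cases hfull : ∃ i, ∀ j, .inl (i, j) ∈ D
  · obtain ⟨i₀, hi₀⟩ := hfull
    exact four_mul_le_card_of_dominates_of_forall_mem hD hi₀
  · push Not at hfull
    exact four_mul_le_card_of_dominates_of_forall_exists_notMem hs hD hfull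

lemma six_mul_le_sum_card_of_isKRDF (hm : 2 ≤ m) (hs : ∀ t, m ≤ s t)
    {f : Vert m s → Finset (Fin 3)} (hf : IsKRDF (Tgraph m s) 3 f) : 6 * m ≤ ∑ v, #(f v) := by
  set A : Fin 3 → Finset (Fin 3 × Fin (2 * m)) := fun c => {p | c ∈ f (.inl p)}
  have hweight : ∑ v, #(f v) = ∑ c, #(A c) + ∑ x, #(f (.inr x)) := by
    rw [Fintype.sum_sum_type, sum_card_eq_sum_card_filter_mem]
  by_cases hfull : ∀ c, 2 * m ≤ #(A c)
  · calc 6 * m = ∑ _c : Fin 3, 2 * m := by rw [Fin.sum_const, smul_eq_mul]; ring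
      _ ≤ ∑ c, #(A c) := sum_le_sum fun c _ => hfull c
      _ ≤ ∑ v, #(f v) := hweight ▸ Nat.le_add_right _ _
  push Not at hfull
  obtain ⟨c, hc⟩ := hfull
  have hmiss : ∀ i, ∃ j, (i, j) ∉ A c := by
    by_contra! h
    obtain ⟨i, hi⟩ := h
    have := card_le_card_of_forall_mk_mem hi
    simp only [Fintype.card_fin] at this
    omega
  have hkey := three_mul_card_le_card_add_card_freeTriples (A c) hmiss
  simp only [Fintype.card_fin] at hkey
  have hlabelled : m * #(freeTriples (A c)) ≤ #{x | f (.inr x) ≠ ∅} :=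
    mul_card_le_card_of_forall_mk_mem hs fun t ht a => by
      rw [mem_filter]
      refine ⟨mem_univ _, fun hempty => ?_⟩
      obtain ⟨u, hadj, hu⟩ := hf _ hempty c
      obtain ⟨p, hp, rfl⟩ := exists_inl_notMem_of_adj_inr ht hadj
      exact hp (by simpa [A] using hu)
  have hfree : 4 * m ≤ #(freeTriples (A c)) + 1 := by omega
  calc 6 * m ≤ m * #(freeTriples (A c)) := by nlinarith
    _ ≤ #{x | f (.inr x) ≠ ∅} := hlabelled
    _ ≤ ∑ x, #(f (.inr x)) := card_filter_ne_empty_le_sum_card _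
    _ ≤ ∑ v, #(f v) := hweight ▸ Nat.le_add_left _ _

end Tgraph

theorem rtdnum_Tgraph (m : ℕ) (hm : 2 ≤ m)
    (s : Fin (2 * m) × Fin (2 * m) × Fin (2 * m) → ℕ) (hs : ∀ t, m ≤ s t) :
    2 * rtdnum (Tgraph m s) 3 = 3 * domnum (Tgraph m s) := by
  have hdom : domnum (Tgraph m s) = 4 * m :=
    IsLeast.csInf_eq ⟨⟨_, Tgraph.dominates_dominatingSet, Tgraph.card_dominatingSet⟩,
      by rintro _ ⟨D, hD, rfl⟩; exact Tgraph.four_mul_le_card_of_dominates hs hD⟩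
  have hrtd : rtdnum (Tgraph m s) 3 = 6 * m :=
    IsLeast.csInf_eq ⟨⟨_, Tgraph.isKRTDF_rainbowLabelling, Tgraph.sum_card_rainbowLabelling⟩,
      by rintro _ ⟨f, hf, rfl⟩; exact Tgraph.six_mul_le_sum_card_of_isKRDF hm hs hf.1⟩
  rw [hdom, hrtd]
  ring
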